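/- arXiv:1808.05258 — 5 statements merged into one kernel-verified Lean document; each statement's English description precedes it below -/
import Mathlib

section
/- The chromatic index of the complete graph on 2ℓ+1 vertices (ℓ ≥ 1) equals 2ℓ+1. -/
open SimpleGraph

/-- Two edges (as unordered pairs) share a vertex. -/
def sharesVertex {V : Type*} (e₁ e₂ : Sym2 V) : Prop := ∃ v, v ∈ e₁ ∧ v ∈ e₂

/-- A proper edge coloring of `G` with colors in `α`: edges of `G` sharing a vertex
receive distinct colors. -/
def IsProperEdgeColoring {V α : Type*} (G : SimpleGraph V) (c : Sym2 V → α) : Prop :=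
  ∀ e₁ ∈ G.edgeSet, ∀ e₂ ∈ G.edgeSet, e₁ ≠ e₂ → sharesVertex e₁ e₂ → c e₁ ≠ c e₂

/-- The chromatic index `χ'(G)`: the least `k` admitting a proper edge coloring
with `k` colors. -/
noncomputable def chromaticIndex {V : Type*} (G : SimpleGraph V) : ℕ :=
  sInf {k | ∃ c : Sym2 V → Fin k, IsProperEdgeColoring G c}

/-- A finite set of edges of `G` forming a matching (pairwise non-adjacent edges). -/
def IsMatchingSet {V : Type*} (G : SimpleGraph V) (M : Finset (Sym2 V)) : Prop :=
  ↑M ⊆ G.edgeSet ∧ ∀ e₁ ∈ M, ∀ e₂ ∈ M, e₁ ≠ e₂ → ¬ sharesVertex e₁ e₂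

/-- The matching number `α'(G)`: maximum cardinality of a matching. -/
noncomputable def matchingNumber {V : Type*} (G : SimpleGraph V) : ℕ :=
  sSup {k | ∃ M : Finset (Sym2 V), IsMatchingSet G M ∧ M.card = k}

/-!
Colouring the edge `{i, j}` of `K_{2ℓ+1}` on the vertex set `ℤ/(2ℓ+1)` by `i + j` is proper, since
`i + j = i + j'` forces `j = j'`. Conversely every colour class is a matching, and a matching on
`2ℓ + 1` vertices has at most `ℓ` edges, so `k` colours cover at most `kℓ` of the `ℓ(2ℓ+1)` edges.
-/

open Finset

section EdgeColoring

variable {V : Type*} {G : SimpleGraph V}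

theorem chromaticIndex_eq_of_isProperEdgeColoring {k : ℕ} (c : Sym2 V → Fin k)
    (hc : IsProperEdgeColoring G c)
    (hmin : ∀ j (c' : Sym2 V → Fin j), IsProperEdgeColoring G c' → k ≤ j) :
    chromaticIndex G = k :=
  le_antisymm (Nat.sInf_le ⟨c, hc⟩) (le_csInf ⟨k, c, hc⟩ fun j ⟨c', hc'⟩ => hmin j c' hc')

def endpointSum [AddCommMagma V] : Sym2 V → V :=
  Sym2.lift ⟨(· + ·), add_comm⟩

theorem isProperEdgeColoring_endpointSum [AddCommMagma V] [IsLeftCancelAdd V] :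
    IsProperEdgeColoring G endpointSum := by
  rintro e₁ - e₂ - hne ⟨v, hv₁, hv₂⟩ hsum
  obtain ⟨a, rfl⟩ := Sym2.mem_iff_exists.1 hv₁
  obtain ⟨b, rfl⟩ := Sym2.mem_iff_exists.1 hv₂
  exact hne (Sym2.congr_right.2 (add_left_cancel hsum))

theorem IsMatchingSet.card_le_card_div_two [Fintype V] [DecidableEq V] {M : Finset (Sym2 V)}
    (hM : IsMatchingSet G M) : #M ≤ Fintype.card V / 2 := by
  have hdisj : (M : Set (Sym2 V)).PairwiseDisjoint Sym2.toFinset := fun e₁ h₁ e₂ h₂ hne =>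
    disjoint_left.2 fun v hv₁ hv₂ =>
      hM.2 e₁ h₁ e₂ h₂ hne ⟨v, Sym2.mem_toFinset.1 hv₁, Sym2.mem_toFinset.1 hv₂⟩
  rw [Nat.le_div_iff_mul_le two_pos]
  calc #M * 2 = ∑ e ∈ M, #e.toFinset := by
        rw [sum_congr rfl fun e he => Sym2.card_toFinset_of_not_isDiag e
          (G.not_isDiag_of_mem_edgeSet (hM.1 he)), sum_const, smul_eq_mul]
    _ = #(M.biUnion Sym2.toFinset) := (card_biUnion hdisj).symm
    _ ≤ Fintype.card V := card_le_univ _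

theorem IsProperEdgeColoring.isMatchingSet_colorClass [Fintype G.edgeSet] {α : Type*}
    [DecidableEq α] {c : Sym2 V → α} (hc : IsProperEdgeColoring G c) (a : α) :
    IsMatchingSet G {e ∈ G.edgeFinset | c e = a} := by
  refine ⟨fun e he => mem_edgeFinset.1 (mem_filter.1 he).1, fun e₁ h₁ e₂ h₂ hne hshare => ?_⟩
  rw [mem_filter, mem_edgeFinset] at h₁ h₂
  exact hc e₁ h₁.1 e₂ h₂.1 hne hshare (h₁.2.trans h₂.2.symm)

theorem IsProperEdgeColoring.card_edgeFinset_le [Fintype V] [DecidableEq V] [Fintype G.edgeSet]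
    {α : Type*} [Fintype α] [DecidableEq α] {c : Sym2 V → α} (hc : IsProperEdgeColoring G c) :
    #G.edgeFinset ≤ Fintype.card α * (Fintype.card V / 2) :=
  calc #G.edgeFinset = ∑ a, #{e ∈ G.edgeFinset | c e = a} :=
        card_eq_sum_card_fiberwise fun e _ => mem_univ (c e)
    _ ≤ ∑ _a : α, Fintype.card V / 2 :=
        sum_le_sum fun a _ => (hc.isMatchingSet_colorClass a).card_le_card_div_two
    _ = Fintype.card α * (Fintype.card V / 2) := by rw [sum_const, card_univ, smul_eq_mul]

end EdgeColoring

theorem choose_two_two_mul_add_one (ℓ : ℕ) : (2 * ℓ + 1).choose 2 = ℓ * (2 * ℓ + 1) := by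
  rw [Nat.choose_two_right, Nat.add_sub_cancel, mul_comm, mul_assoc,
    Nat.mul_div_cancel_left _ two_pos]

/-- The chromatic index of the complete graph on `2ℓ+1` vertices (`ℓ ≥ 1`)
equals `2ℓ+1`. -/
theorem chromaticIndex_completeGraph_odd (ℓ : ℕ) (hℓ : 1 ≤ ℓ) :
    chromaticIndex (⊤ : SimpleGraph (Fin (2 * ℓ + 1))) = 2 * ℓ + 1 := by
  refine chromaticIndex_eq_of_isProperEdgeColoring endpointSum
    isProperEdgeColoring_endpointSum fun k c hc => ?_
  have hcount := hc.card_edgeFinset_le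
  rw [card_edgeFinset_top_eq_card_choose_two, Fintype.card_fin, Fintype.card_fin,
    choose_two_two_mul_add_one, show (2 * ℓ + 1) / 2 = ℓ by omega, mul_comm] at hcount
  exact Nat.le_of_mul_le_mul_right hcount hℓ
end

section
/- (Vizing's theorem) For any finite simple graph G, χ'(G) ≤ Δ(G) + 1. -/
open SimpleGraph

/-!
Induction on the number of edges. Let `c` properly colour `H - xy₀` with `Δ + 1` colours, so
that every vertex misses some colour. Take a maximal fan `y₀, y₁, …, y_k` at `x`: distinct
neighbours of `x` such that the colour of `xy_{i+1}` is missing at `y_i`. Let `α` be missing at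
`x` and `β` at `y_k`. If `β` is missing at `x` too, rotate the fan: give each `xy_i` the colour
of `xy_{i+1}` and `xy_k` the colour `β`. Otherwise, by maximality `β` is the colour of some
`xy_j`, and swapping `α` and `β` on the `α/β`-Kempe chain through `x` makes `β` missing at `x`.
That chain is a path ending at `x`, so it cannot reach both `y_{j-1}` and `y_k`, and after the
swap either the fan up to `y_{j-1}` or the whole fan can be rotated.
-/

namespace Vizing

variable {V C : Type*} {G G' : SimpleGraph V} {c : Sym2 V → C} {u v x : V} {γ δ : C}

def IsProper (G : SimpleGraph V) (c : Sym2 V → C) : Prop :=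
  ∀ ⦃v a b : V⦄, G.Adj v a → G.Adj v b → a ≠ b → c s(v, a) ≠ c s(v, b)

def IsMissing (G : SimpleGraph V) (c : Sym2 V → C) (v : V) (γ : C) : Prop :=
  ∀ ⦃w⦄, G.Adj v w → c s(v, w) ≠ γ

lemma IsProper.mono (h : G' ≤ G) (hc : IsProper G c) : IsProper G' c :=
  fun _ _ _ ha hb hab => hc (h ha) (h hb) hab

lemma IsProper.isProperEdgeColoring (hc : IsProper G c) : IsProperEdgeColoring G c := by
  rintro e₁ he₁ e₂ he₂ hne ⟨v, hv₁, hv₂⟩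
  obtain ⟨a, rfl⟩ := Sym2.mem_iff_exists.mp hv₁
  obtain ⟨b, rfl⟩ := Sym2.mem_iff_exists.mp hv₂
  exact hc he₁ he₂ fun hab => hne (hab ▸ rfl)

lemma exists_isMissing [Finite V] (G : SimpleGraph V) (c : Sym2 V → C) (v : V)
    (h : (G.neighborSet v).ncard < Nat.card C) : ∃ γ, IsMissing G c v γ := by
  by_contra! hall
  have hsurj : Set.univ ⊆ (fun w => c s(v, w)) '' G.neighborSet v := fun γ _ => by
    simpa [IsMissing] using hall γ
  have := (Set.ncard_le_ncard hsurj (Set.toFinite _)).trans (Set.ncard_image_le (Set.toFinite _))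
  rw [Set.ncard_univ] at this
  omega

lemma IsMissing.update_of_notMem [DecidableEq V] {e : Sym2 V} (hv : v ∉ e)
    (h : IsMissing G c v γ) : IsMissing G (Function.update c e δ) v γ := by
  intro w hw
  rw [Function.update_of_ne (by rintro rfl; exact hv (Sym2.mem_mk_left v w))]
  exact h hw

lemma IsProper.isMissing_update [DecidableEq V] (hc : IsProper G c) (huv : G.Adj u v)
    (hγ : IsMissing G c u γ) : IsMissing G (Function.update c s(u, v) γ) u (c s(u, v)) := by
  intro w hw
  by_cases hwv : w = v
  · subst hwv
    rw [Function.update_self]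
    exact (hγ huv).symm
  · rw [Function.update_of_ne (fun h => hwv (Sym2.congr_right.mp h))]
    exact hc hw huv hwv

lemma IsProper.update_sup_edge [DecidableEq V] (hc : IsProper G c)
    (hu : IsMissing G c u γ) (hv : IsMissing G c v γ) :
    IsProper (G ⊔ edge u v) (Function.update c s(u, v) γ) := by
  have hG : ∀ {z a}, (G ⊔ edge u v).Adj z a → s(z, a) ≠ s(u, v) → G.Adj z a := by
    intro z a h hne
    rcases h with h | h
    · exact h
    · rw [edge_adj] at h
      rcases h.1 with ⟨rfl, rfl⟩ | ⟨rfl, rfl⟩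
      exacts [absurd rfl hne, absurd Sym2.eq_swap hne]
  have hnew : ∀ {z a b}, (G ⊔ edge u v).Adj z b → s(z, a) = s(u, v) → s(z, b) ≠ s(u, v) →
      Function.update c s(u, v) γ s(z, a) ≠ Function.update c s(u, v) γ s(z, b) := by
    intro z a b hb ha hb'
    rw [ha, Function.update_self, Function.update_of_ne hb']
    have hz : z = u ∨ z = v := Sym2.mem_iff.mp (ha ▸ Sym2.mem_mk_left z a)
    rcases hz with rfl | rfl
    exacts [(hu (hG hb hb')).symm, (hv (hG hb hb')).symm]
  intro z a b ha hb hab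
  by_cases ha' : s(z, a) = s(u, v) <;> by_cases hb' : s(z, b) = s(u, v)
  · exact absurd (Sym2.congr_right.mp (ha'.trans hb'.symm)) hab
  · exact hnew hb ha' hb'
  · exact (hnew ha hb' ha').symm
  · rw [Function.update_of_ne ha', Function.update_of_ne hb']
    exact hc (hG ha ha') (hG hb hb') hab

def kempeGraph (G : SimpleGraph V) (c : Sym2 V → C) (α β : C) : SimpleGraph V where
  Adj u w := G.Adj u w ∧ (c s(u, w) = α ∨ c s(u, w) = β)
  symm := ⟨fun _ _ h => ⟨h.1.symm, by rw [Sym2.eq_swap]; exact h.2⟩⟩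
  loopless := ⟨fun u h => G.loopless.irrefl u h.1⟩

section Kempe

variable {α β : C}

lemma ncard_neighborSet_kempeGraph_le (hc : IsProper G c) (v : V) {s : Set C}
    (hs_fin : s.Finite) (hs : ∀ w, (kempeGraph G c α β).Adj v w → c s(v, w) ∈ s) :
    ((kempeGraph G c α β).neighborSet v).ncard ≤ s.ncard :=
  Set.ncard_le_ncard_of_injOn (fun w => c s(v, w)) hs
    (fun _ ha _ hb hab => by_contra fun hne => hc ha.1 hb.1 hne hab) hs_fin

lemma ncard_neighborSet_kempeGraph_le_two (hc : IsProper G c) (v : V) :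
    ((kempeGraph G c α β).neighborSet v).ncard ≤ 2 :=
  (ncard_neighborSet_kempeGraph_le hc v (s := {α, β}) (Set.toFinite _) fun _ h => h.2).trans
    (Set.ncard_insert_le _ _ |>.trans (by rw [Set.ncard_singleton]))

lemma ncard_neighborSet_kempeGraph_le_one (hc : IsProper G c)
    (hv : IsMissing G c v α ∨ IsMissing G c v β) :
    ((kempeGraph G c α β).neighborSet v).ncard ≤ 1 := by
  rcases hv with hv | hv
  · simpa using ncard_neighborSet_kempeGraph_le hc v (s := {β}) (Set.toFinite _) fun w h =>
      h.2.resolve_left (hv h.1)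
  · simpa using ncard_neighborSet_kempeGraph_le hc v (s := {α}) (Set.toFinite _) fun w h =>
      h.2.resolve_right (hv h.1)

variable [DecidableEq C]

open Classical in
/-- Swapping on every edge that meets `P` is harmless: `Equiv.swap α β` fixes the other colours,
and an `α`/`β`-coloured edge meeting `P` lies in `P`. -/
noncomputable def kempeSwap (P : (kempeGraph G c α β).ConnectedComponent) : Sym2 V → C :=
  fun e => if ∃ v ∈ e, v ∈ P.supp then Equiv.swap α β (c e) else c e

variable (P : (kempeGraph G c α β).ConnectedComponent) {w : V}

lemma kempeSwap_apply_of_mem (hu : u ∈ P.supp) :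
    kempeSwap P s(u, w) = Equiv.swap α β (c s(u, w)) :=
  if_pos ⟨u, Sym2.mem_mk_left u w, hu⟩

lemma kempeSwap_apply_of_notMem (h : G.Adj u w) (hu : u ∉ P.supp) :
    kempeSwap P s(u, w) = c s(u, w) := by
  by_cases hw : w ∈ P.supp
  · have hcol : ¬(c s(u, w) = α ∨ c s(u, w) = β) := fun hcol =>
      hu ((P.mem_supp_congr_adj (show (kempeGraph G c α β).Adj u w from ⟨h, hcol⟩)).mpr hw)
    push Not at hcol
    rw [kempeSwap, if_pos ⟨w, Sym2.mem_mk_right u w, hw⟩,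
      Equiv.swap_apply_of_ne_of_ne hcol.1 hcol.2]
  · rw [kempeSwap, if_neg]
    rintro ⟨z, hz, hzP⟩
    rcases Sym2.mem_iff.mp hz with rfl | rfl
    exacts [hu hzP, hw hzP]

lemma kempeSwap_apply_of_ne (h : G.Adj u w) (hα : c s(u, w) ≠ α) (hβ : c s(u, w) ≠ β) :
    kempeSwap P s(u, w) = c s(u, w) := by
  by_cases hu : u ∈ P.supp
  · rw [kempeSwap_apply_of_mem P hu, Equiv.swap_apply_of_ne_of_ne hα hβ]
  · exact kempeSwap_apply_of_notMem P h hu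

lemma IsProper.kempeSwap (hc : IsProper G c) : IsProper G (kempeSwap P) := by
  intro v a b ha hb hab
  by_cases hv : v ∈ P.supp
  · rw [kempeSwap_apply_of_mem P hv, kempeSwap_apply_of_mem P hv]
    exact (Equiv.injective _).ne (hc ha hb hab)
  · rw [kempeSwap_apply_of_notMem P ha hv, kempeSwap_apply_of_notMem P hb hv]
    exact hc ha hb hab

lemma IsMissing.kempeSwap_of_mem (h : IsMissing G c v γ) (hv : v ∈ P.supp) :
    IsMissing G (kempeSwap P) v (Equiv.swap α β γ) := fun w hw => by
  rw [kempeSwap_apply_of_mem P hv]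
  exact (Equiv.injective _).ne (h hw)

lemma IsMissing.kempeSwap_of_notMem (h : IsMissing G c v γ) (hv : v ∉ P.supp) :
    IsMissing G (kempeSwap P) v γ := fun w hw => by
  rw [kempeSwap_apply_of_notMem P hw hv]
  exact h hw

lemma IsMissing.kempeSwap_of_ne (h : IsMissing G c v γ) (hα : γ ≠ α) (hβ : γ ≠ β) :
    IsMissing G (kempeSwap P) v γ := by
  by_cases hv : v ∈ P.supp
  · simpa only [Equiv.swap_apply_of_ne_of_ne hα hβ] using h.kempeSwap_of_mem P hv
  · exact h.kempeSwap_of_notMem P hv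

end Kempe

/-- A component with `n` vertices is connected, so it has at least `n - 1` edges, while three
vertices of degree at most one bound its degree sum by `2n - 3`. -/
lemma eq_of_ncard_neighborSet_le_one [Finite V] {K : SimpleGraph V}
    (hK : ∀ w, (K.neighborSet w).ncard ≤ 2) {P : K.ConnectedComponent}
    (hxP : x ∈ P.supp) (huP : u ∈ P.supp) (hvP : v ∈ P.supp)
    (hx : (K.neighborSet x).ncard ≤ 1) (hu : (K.neighborSet u).ncard ≤ 1)
    (hv : (K.neighborSet v).ncard ≤ 1) (hux : u ≠ x) (hvx : v ≠ x) : u = v := by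
  classical
  by_contra huv
  have := Fintype.ofFinite V
  have hdeg : ∀ w : P, P.toSimpleGraph.degree w ≤ (K.neighborSet w).ncard := by
    intro w
    rw [← card_neighborSet_eq_degree, ← Nat.card_eq_fintype_card, Nat.card_coe_set_eq]
    exact Set.ncard_le_ncard_of_injOn Subtype.val (fun z hz => hz) Subtype.val_injective.injOn
  set T : Finset P := {⟨x, hxP⟩, ⟨u, huP⟩, ⟨v, hvP⟩}
  have hT : T.card = 3 := by
    rw [Finset.card_insert_of_notMem (by simp [hux.symm, hvx.symm]),
      Finset.card_insert_of_notMem (by simp [huv]), Finset.card_singleton]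
  have hsumT : ∑ w ∈ T, P.toSimpleGraph.degree w ≤ T.card * 1 :=
    Finset.sum_le_card_nsmul _ _ _ fun w hw => by
      simp only [T, Finset.mem_insert, Finset.mem_singleton] at hw
      rcases hw with rfl | rfl | rfl <;> exact (hdeg _).trans ‹_›
  have hsumTc : ∑ w ∈ Tᶜ, P.toSimpleGraph.degree w ≤ Tᶜ.card * 2 :=
    Finset.sum_le_card_nsmul _ _ _ fun w _ => (hdeg w).trans (hK w)
  have handshake : ∑ w, P.toSimpleGraph.degree w = 2 * Nat.card P.toSimpleGraph.edgeSet := by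
    rw [Nat.card_eq_fintype_card, ← edgeFinset_card]
    convert P.toSimpleGraph.sum_degrees_eq_twice_card_edges
  rw [← Finset.sum_add_sum_compl T] at handshake
  have htree := P.connected_toSimpleGraph.card_vert_le_card_edgeSet_add_one
  have hcard := Finset.card_add_card_compl T
  rw [← Nat.card_eq_fintype_card] at hcard
  omega

/-- `x y 0` is the edge still to be coloured; it need not be an edge of `G`. -/
structure IsFan (G : SimpleGraph V) (c : Sym2 V → C) (x : V) (k : ℕ) (y : ℕ → V) : Prop where
  injOn : Set.InjOn y (Set.Iic k)
  zero_ne : y 0 ≠ x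
  adj : ∀ i, 0 < i → i ≤ k → G.Adj x (y i)
  isMissing : ∀ i < k, IsMissing G c (y i) (c s(x, y (i + 1)))

namespace IsFan

variable {k m : ℕ} {y : ℕ → V}

lemma ne_center (h : IsFan G c x k y) {i : ℕ} (hi : i ≤ k) : y i ≠ x := by
  rcases Nat.eq_zero_or_pos i with rfl | hi₀
  exacts [h.zero_ne, (h.adj i hi₀ hi).ne']

lemma apply_ne (h : IsFan G c x k y) {i j : ℕ} (hi : i ≤ k) (hj : j ≤ k) (hij : i ≠ j) :
    y i ≠ y j :=
  (h.injOn.ne_iff hi hj).mpr hij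

lemma of_le {c' : Sym2 V → C} (h : IsFan G c x k y) (hm : m ≤ k)
    (hmiss : ∀ i < m, IsMissing G c' (y i) (c' s(x, y (i + 1)))) : IsFan G c' x m y where
  injOn := h.injOn.mono (Set.Iic_subset_Iic.mpr hm)
  zero_ne := h.zero_ne
  adj i hi hik := h.adj i hi (hik.trans hm)
  isMissing := hmiss

lemma snoc [DecidableEq V] (h : IsFan G c x k y) {w : V} (hw : G.Adj x w)
    (hwy : w ∉ y '' Set.Iic k) (hmiss : IsMissing G c (y k) (c s(x, w))) :
    IsFan G c x (k + 1) (Function.update y (k + 1) w) := by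
  have hy : ∀ i ≤ k, Function.update y (k + 1) w i = y i := fun i hi =>
    Function.update_of_ne (by omega) _ _
  refine ⟨?_, by rw [hy 0 k.zero_le]; exact h.zero_ne, ?_, ?_⟩
  · intro i hi j hj hij
    simp only [Set.mem_Iic] at hi hj
    rcases hi.lt_or_eq with hi | rfl <;> rcases hj.lt_or_eq with hj | rfl
    · rw [hy i (by omega), hy j (by omega)] at hij
      exact h.injOn (Set.mem_Iic.mpr (by omega)) (Set.mem_Iic.mpr (by omega)) hij
    · rw [hy i (by omega), Function.update_self] at hij
      exact absurd ⟨i, Set.mem_Iic.mpr (by omega), hij⟩ hwy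
    · rw [hy j (by omega), Function.update_self] at hij
      exact absurd ⟨j, Set.mem_Iic.mpr (by omega), hij.symm⟩ hwy
    · rfl
  · intro i hi hik
    rcases hik.lt_or_eq with hik | rfl
    · rw [hy i (by omega)]; exact h.adj i hi (by omega)
    · rw [Function.update_self]; exact hw
  · intro i hik
    rcases (Nat.lt_succ_iff.mp hik).lt_or_eq with hik | rfl
    · rw [hy i hik.le, hy (i + 1) hik]; exact h.isMissing i hik
    · rw [hy i le_rfl, Function.update_self]; exact hmiss

lemma lt_card [Finite V] (h : IsFan G c x k y) : k < Nat.card V := by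
  have hinj : Function.Injective fun i : Fin (k + 1) => y i := fun i j hij =>
    Fin.ext (h.injOn (Set.mem_Iic.mpr (Nat.lt_succ_iff.mp i.isLt))
      (Set.mem_Iic.mpr (Nat.lt_succ_iff.mp j.isLt)) hij)
  simpa using Nat.card_le_card_of_injective _ hinj

end IsFan

lemma exists_isProper_sup_edge_of_isFan {k : ℕ} {y : ℕ → V} (hc : IsProper G c)
    (hfan : IsFan G c x k y) (hx : IsMissing G c x γ) (hy : IsMissing G c (y k) γ) :
    ∃ c' : Sym2 V → C, IsProper (G ⊔ edge x (y 0)) c' := by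
  classical
  induction k generalizing c γ with
  | zero => exact ⟨_, hc.update_sup_edge hx hy⟩
  | succ k ih =>
    have hadj := hfan.adj (k + 1) k.succ_pos le_rfl
    have hnotMem : ∀ i ≤ k, y i ∉ s(x, y (k + 1)) := fun i hi hmem =>
      (Sym2.mem_iff.mp hmem).elim (hfan.ne_center (by omega)) (hfan.apply_ne (by omega) le_rfl
        (by omega))
    refine ih ((hc.update_sup_edge hx hy).mono le_sup_left) (hfan.of_le k.le_succ fun i hi => ?_)
      (hc.isMissing_update hadj hx)
      ((hfan.isMissing k k.lt_succ_self).update_of_notMem (hnotMem k le_rfl))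
    rw [Function.update_of_ne fun h =>
      hfan.apply_ne (by omega) le_rfl (by omega) (Sym2.congr_right.mp h)]
    exact (hfan.isMissing i (by omega)).update_of_notMem (hnotMem i (by omega))

lemma exists_maximal_isFan [Finite V] {y₀ : V} (hy₀ : y₀ ≠ x) :
    ∃ k y, IsFan G c x k y ∧ y 0 = y₀ ∧
      ∀ w, G.Adj x w → IsMissing G c (y k) (c s(x, w)) → w ∈ y '' Set.Iic k := by
  classical
  set lengths := {k | ∃ y, IsFan G c x k y ∧ y 0 = y₀}
  have hbdd : BddAbove lengths := ⟨Nat.card V, fun k ⟨_, hfan, _⟩ => hfan.lt_card.le⟩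
  have hne : lengths.Nonempty := ⟨0, fun _ => y₀,
    ⟨fun _ hi _ hj _ => (Nat.le_zero.mp hi).trans (Nat.le_zero.mp hj).symm, hy₀, by omega,
      by omega⟩, rfl⟩
  obtain ⟨y, hfan, hy⟩ := Nat.sSup_mem hne hbdd
  refine ⟨_, y, hfan, hy, fun w hw hmiss => ?_⟩
  by_contra hwy
  have hlong : sSup lengths + 1 ∈ lengths :=
    ⟨_, hfan.snoc hw hwy hmiss, by rw [Function.update_of_ne (by omega), hy]⟩
  exact (le_csSup hbdd hlong).not_gt (Nat.lt_succ_self _)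

lemma exists_isProper_sup_edge_of_isFan_of_color_eq [Finite V] [DecidableEq C] {k j : ℕ}
    {y : ℕ → V} {α β : C} (hc : IsProper G c) (hfan : IsFan G c x k y) (hα : IsMissing G c x α)
    (hβ : IsMissing G c (y k) β) (hj : 0 < j) (hjk : j < k) (hβj : c s(x, y j) = β) :
    ∃ c' : Sym2 V → C, IsProper (G ⊔ edge x (y 0)) c' := by
  set P := (kempeGraph G c α β).connectedComponentMk x
  have hxP : x ∈ P.supp := ConnectedComponent.connectedComponentMk_mem
  have hx₂ : IsMissing G (kempeSwap P) x β := by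
    simpa using hα.kempeSwap_of_mem P hxP
  have hβj' : IsMissing G c (y (j - 1)) β := by
    simpa [Nat.sub_add_cancel hj, hβj] using hfan.isMissing (j - 1) (by omega)
  have hfan₂ : ∀ i < k, i + 1 ≠ j →
      IsMissing G (kempeSwap P) (y i) (kempeSwap P s(x, y (i + 1))) := by
    intro i hi hij
    have hadj := hfan.adj (i + 1) i.succ_pos hi
    have hne_α : c s(x, y (i + 1)) ≠ α := hα hadj
    have hne_β : c s(x, y (i + 1)) ≠ β :=
      hβj ▸ hc hadj (hfan.adj j hj hjk.le) (hfan.apply_ne hi hjk.le hij)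
    rw [kempeSwap_apply_of_ne P hadj hne_α hne_β]
    exact (hfan.isMissing i hi).kempeSwap_of_ne P hne_α hne_β
  by_cases hP : y (j - 1) ∈ P.supp
  · have hyk : y k ∉ P.supp := fun hyk => hfan.apply_ne (by omega) le_rfl (by omega) <|
      eq_of_ncard_neighborSet_le_one (ncard_neighborSet_kempeGraph_le_two hc) hxP hP hyk
        (ncard_neighborSet_kempeGraph_le_one hc (.inl hα))
        (ncard_neighborSet_kempeGraph_le_one hc (.inr hβj'))
        (ncard_neighborSet_kempeGraph_le_one hc (.inr hβ))
        (hfan.ne_center (by omega)) (hfan.ne_center le_rfl)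
    refine exists_isProper_sup_edge_of_isFan (hc.kempeSwap P) (hfan.of_le le_rfl fun i hi => ?_)
      hx₂ (hβ.kempeSwap_of_notMem P hyk)
    by_cases hij : i + 1 = j
    · obtain rfl : i = j - 1 := by omega
      rw [hij, kempeSwap_apply_of_mem P hxP, hβj, Equiv.swap_apply_right]
      simpa using hβj'.kempeSwap_of_mem P hP
    · exact hfan₂ i hi hij
  · exact exists_isProper_sup_edge_of_isFan (hc.kempeSwap P)
      (hfan.of_le (by omega) fun i hi => hfan₂ i (by omega) (by omega))
      hx₂ (hβj'.kempeSwap_of_notMem P hP)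

lemma IsProper.exists_isProper_sup_edge [Finite V] [DecidableEq C] {y₀ : V} (hc : IsProper G c)
    (hmiss : ∀ v, ∃ γ, IsMissing G c v γ) (hy₀ : y₀ ≠ x) (hnadj : ¬G.Adj x y₀) :
    ∃ c' : Sym2 V → C, IsProper (G ⊔ edge x y₀) c' := by
  obtain ⟨k, y, hfan, rfl, hmax⟩ := exists_maximal_isFan (c := c) (G := G) hy₀
  obtain ⟨α, hα⟩ := hmiss x
  obtain ⟨β, hβ⟩ := hmiss (y k)
  by_cases hβx : IsMissing G c x β
  · exact exists_isProper_sup_edge_of_isFan hc hfan hβx hβ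
  obtain ⟨w, hw, hwβ⟩ : ∃ w, G.Adj x w ∧ c s(x, w) = β := by simpa [IsMissing] using hβx
  obtain ⟨j, hjk, rfl⟩ := hmax w hw (hwβ ▸ hβ)
  have hj : 0 < j := Nat.pos_of_ne_zero (by rintro rfl; exact hnadj hw)
  have hjk : j < k := (Set.mem_Iic.mp hjk).lt_of_ne <| by
    rintro rfl
    exact hβ hw.symm (by rwa [Sym2.eq_swap])
  exact exists_isProper_sup_edge_of_isFan_of_color_eq hc hfan hα hβ hj hjk hwβ

lemma le_deleteEdges_sup_edge (H : SimpleGraph V) (x y : V) :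
    H ≤ H.deleteEdges {s(x, y)} ⊔ edge x y := by
  intro a b hab
  by_cases he : s(a, b) = s(x, y)
  · right
    rw [edge_adj]
    exact ⟨by simpa [Sym2.eq_iff] using he, hab.ne⟩
  · left
    exact (deleteEdges_adj ..).mpr ⟨hab, he⟩

theorem exists_isProper_of_ncard_neighborSet_le [Finite V] {D : ℕ} (H : SimpleGraph V)
    (hH : ∀ v, (H.neighborSet v).ncard ≤ D) : ∃ c : Sym2 V → Fin (D + 1), IsProper H c := by
  by_cases hedge : ∃ x y, H.Adj x y
  · obtain ⟨x, y, hxy⟩ := hedge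
    have hdeg : ∀ v, ((H.deleteEdges {s(x, y)}).neighborSet v).ncard ≤ D := fun v =>
      (Set.ncard_le_ncard (neighborSet_mono (deleteEdges_le _) v)).trans (hH v)
    obtain ⟨c, hc⟩ := exists_isProper_of_ncard_neighborSet_le _ hdeg
    have hmiss : ∀ v, ∃ γ, IsMissing (H.deleteEdges {s(x, y)}) c v γ := fun v =>
      exists_isMissing _ c v (by simpa using Nat.lt_succ_of_le (hdeg v))
    obtain ⟨c', hc'⟩ := hc.exists_isProper_sup_edge hmiss hxy.ne' (by simp)
    exact ⟨c', hc'.mono (le_deleteEdges_sup_edge H x y)⟩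
  · exact ⟨fun _ => 0, fun v a _ ha => absurd ⟨v, a, ha⟩ hedge⟩
termination_by H.edgeSet.ncard
decreasing_by
  rw [edgeSet_deleteEdges]
  exact Set.ncard_sdiff_singleton_lt_of_mem hxy

end Vizing

/-- Vizing's theorem: for any finite simple graph `G`, `χ'(G) ≤ Δ(G) + 1`. -/
theorem chromaticIndex_le_maxDegree_add_one {V : Type*} [Fintype V] (G : SimpleGraph V)
    [DecidableRel G.Adj] : chromaticIndex G ≤ G.maxDegree + 1 := by
  obtain ⟨c, hc⟩ := Vizing.exists_isProper_of_ncard_neighborSet_le G fun v => by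
    rw [← Nat.card_coe_set_eq, Nat.card_eq_fintype_card, card_neighborSet_eq_degree]
    exact G.degree_le_maxDegree v
  exact Nat.sInf_le ⟨c, hc.isProperEdgeColoring⟩
end

section
/- Every triangle-free simple graph on 7 vertices in which at least three vertices have degree 4 contains no 5-cycle. -/
open SimpleGraph

/-!
Two vertices of degree 4 in a triangle-free graph on 7 vertices cannot be adjacent, since their
neighbourhoods would be disjoint and cover 8 vertices. So the set `S` of degree-4 vertices is
independent, and as `|S| ≥ 3` each of them is adjacent to all of the at most 4 vertices outside
`S`. Triangle-freeness then makes the complement of `S` independent too, so the graph is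
bipartite and has no closed walk of odd length.
-/

namespace SimpleGraph

theorem isBipartiteWith_compl_of_isIndepSet {V : Type*} {G : SimpleGraph V} {s : Set V}
    (hs : G.IsIndepSet s) (hsc : G.IsIndepSet sᶜ) : G.IsBipartiteWith s sᶜ where
  disjoint := disjoint_compl_right
  mem_of_adj v w hvw := by
    by_cases hv : v ∈ s <;> by_cases hw : w ∈ s
    · exact absurd hvw (hs hv hw hvw.ne)
    · exact .inl ⟨hv, hw⟩
    · exact .inr ⟨hv, hw⟩
    · exact absurd hvw (hsc hv hw hvw.ne)

variable {V : Type*} [Fintype V] [DecidableEq V] {G : SimpleGraph V} [DecidableRel G.Adj]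

theorem CliqueFree.degree_add_degree_le_of_adj (h : G.CliqueFree 3) {x y : V} (hxy : G.Adj x y) :
    G.degree x + G.degree y ≤ Fintype.card V := by
  have hdisj : Disjoint (G.neighborFinset x) (G.neighborFinset y) := by
    refine Finset.disjoint_left.mpr fun z hzx hzy => ?_
    rw [mem_neighborFinset] at hzx hzy
    exact h {x, y, z} (is3Clique_triple_iff.mpr ⟨hxy, hzx, hzy⟩)
  rw [← card_neighborFinset_eq_degree, ← card_neighborFinset_eq_degree,
    ← Finset.card_union_of_disjoint hdisj]
  exact Finset.card_le_univ _

theorem neighborFinset_eq_compl_of_isIndepSet {s : Finset V} (hs : G.IsIndepSet s) {x : V}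
    (hx : x ∈ s) (hdeg : Fintype.card V ≤ G.degree x + s.card) :
    G.neighborFinset x = sᶜ := by
  refine Finset.eq_of_subset_of_card_le (fun y hy => ?_) ?_
  · rw [mem_neighborFinset] at hy
    exact Finset.mem_compl.mpr fun hys => hs hx hys hy.ne hy
  · rw [Finset.card_compl, card_neighborFinset_eq_degree]
    omega

theorem CliqueFree.isBipartite_of_forall_mem_degree (h : G.CliqueFree 3) {s : Finset V}
    (hs : s.Nonempty) (hdeg_half : ∀ x ∈ s, Fintype.card V < 2 * G.degree x)
    (hdeg_compl : ∀ x ∈ s, Fintype.card V ≤ G.degree x + s.card) : G.IsBipartite := by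
  have hind : G.IsIndepSet s := fun x hx y hy _ hxy => by
    have := h.degree_add_degree_le_of_adj hxy
    have := hdeg_half x hx
    have := hdeg_half y hy
    omega
  obtain ⟨x, hx⟩ := hs
  have hN : G.neighborSet x = ↑sᶜ := by
    rw [← coe_neighborFinset, neighborFinset_eq_compl_of_isIndepSet hind hx (hdeg_compl x hx)]
  have hind_compl : G.IsIndepSet (↑s)ᶜ := by
    rw [← Finset.coe_compl, ← hN]
    exact isIndepSet_neighborSet_of_triangleFree G h x
  exact (isBipartiteWith_compl_of_isIndepSet hind hind_compl).isBipartite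

end SimpleGraph

/-- A triangle-free simple graph on 7 vertices with at least three vertices of
degree 4 contains no 5-cycle. -/
theorem no_five_cycle (G : SimpleGraph (Fin 7)) [DecidableRel G.Adj]
    (htf : G.CliqueFree 3)
    (hdeg : 3 ≤ (Finset.univ.filter fun v => G.degree v = 4).card) :
    ¬ ∃ (v : Fin 7) (w : G.Walk v v), w.IsCycle ∧ w.length = 5 := by
  rintro ⟨v, w, -, hlen⟩
  have hbip : G.IsBipartite := by
    refine htf.isBipartite_of_forall_mem_degree (s := Finset.univ.filter fun v => G.degree v = 4)
      (Finset.card_pos.mp (by omega)) (fun x hx => ?_) (fun x hx => ?_) <;>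
    · rw [Finset.mem_filter] at hx
      rw [Fintype.card_fin, hx.2]
      omega
  have heven : Even w.length := two_colorable_iff_forall_loop_even.mp hbip v w
  rw [hlen] at heven
  exact Nat.not_even_iff_odd.mpr (by decide) heven
end

section
/- A triangle-free simple graph on 7 vertices with degree sequence consisting of three vertices of degree 4 and four vertices of degree 3 contains no odd cycle, i.e., is bipartite. -/
open SimpleGraph

/-! The degrees sum to `4·3 + 3·4 = 24`, so `G` has at least `12 = ⌊7²/4⌋` edges, the most
Mantel's theorem allows for a triangle-free graph on 7 vertices. By the uniqueness part of
Turán's theorem `G` is then isomorphic to the Turán graph `T(7, 2) = K_{3,4}`, hence 2-colourable,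
and a 2-colouring rules out closed walks of odd length. -/

open Finset

lemma SimpleGraph.mul_card_filter_degree_add_le {V : Type*} [Fintype V] (G : SimpleGraph V)
    [DecidableRel G.Adj] {a b : ℕ} (hab : a ≠ b) :
    a * #{v | G.degree v = a} + b * #{v | G.degree v = b} ≤ 2 * #G.edgeFinset := by
  let S (c : ℕ) : Finset V := {v | G.degree v = c}
  have hdisj : Disjoint (S a) (S b) :=
    disjoint_filter.2 fun _ _ (ha : _ = a) hb => hab (ha.symm.trans hb)
  have hsum (c : ℕ) : ∑ v ∈ S c, G.degree v = c * #(S c) := by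
    rw [sum_const_nat fun v hv => (mem_filter.1 hv).2, mul_comm]
  calc a * #(S a) + b * #(S b) = ∑ v ∈ (S a).disjUnion (S b) hdisj, G.degree v := by
        rw [sum_disjUnion, hsum, hsum]
    _ ≤ ∑ v, G.degree v := sum_le_univ_sum_of_nonneg fun _ => Nat.zero_le _
    _ = 2 * #G.edgeFinset := G.sum_degrees_eq_twice_card_edges

lemma SimpleGraph.colorable_turanGraph {n r : ℕ} (hr : 0 < r) : (turanGraph n r).Colorable r :=
  ⟨Coloring.mk (fun v => ⟨v % r, Nat.mod_lt _ hr⟩) fun h heq => h (Fin.val_eq_of_eq heq)⟩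

lemma SimpleGraph.CliqueFree.card_edgeFinset_le_sq_div_four {V : Type*} [Fintype V]
    {G : SimpleGraph V} [DecidableRel G.Adj] (h : G.CliqueFree 3) :
    #G.edgeFinset ≤ Fintype.card V ^ 2 / 4 := by
  have hchoose : (Fintype.card V % 2).choose 2 = 0 :=
    Nat.choose_eq_zero_of_lt (Nat.mod_lt _ two_pos)
  refine (h.card_edgeFinset_le (r := 2)).trans ?_
  rw [hchoose, add_zero, Nat.add_one_sub_one, mul_one]
  exact Nat.div_le_div_right (Nat.sub_le _ _)

/-- A triangle-free simple graph on 7 vertices with three vertices of degree 4 and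
four of degree 3 contains no odd cycle, i.e. is bipartite. -/
theorem no_odd_cycle_bipartite (G : SimpleGraph (Fin 7)) [DecidableRel G.Adj]
    (htf : G.CliqueFree 3)
    (h4 : (Finset.univ.filter fun v => G.degree v = 4).card = 3)
    (h3 : (Finset.univ.filter fun v => G.degree v = 3).card = 4) :
    (∀ (v : Fin 7) (w : G.Walk v v), w.IsCycle → ¬ Odd w.length) ∧ G.Colorable 2 := by
  have hedges : 12 ≤ #G.edgeFinset := by
    have := G.mul_card_filter_degree_add_le (a := 4) (b := 3) (by decide)
    rw [h4, h3] at this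
    omega
  have hmax : G.IsTuranMaximal 2 :=
    ⟨htf, fun H _ hH => hH.card_edgeFinset_le_sq_div_four.trans (by simpa using hedges)⟩
  have hcol : G.Colorable 2 :=
    (colorable_turanGraph two_pos).of_hom hmax.nonempty_iso_turanGraph.some.toHom
  refine ⟨fun v w _ => ?_, hcol⟩
  exact Nat.not_odd_iff_even.2 (two_colorable_iff_forall_loop_even.1 hcol v w)
end

section
/- There is no proper edge coloring of the complete bipartite graph K_{3,4} with 4 colors {1,2,3,4} such that no 4-cycle of K_{3,4} has two of its edges colored 1 and at least one edge colored 2. -/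
open SimpleGraph

/-- The `a`'s of the rows lie in distinct columns, as do the `b`'s, and a column holding the `a` of
row `l` and the `b` of row `i ≠ l` would close the path `c i j = a`, `c i k = b`, `c l k = a`. -/
theorem two_mul_card_le_of_forall_exists_eq {ι κ α : Type*} [Fintype ι] [Fintype κ]
    (c : ι → κ → α) {a b : α} (hab : a ≠ b)
    (hcol : ∀ j, Function.Injective fun i => c i j)
    (hpath : ∀ i l j k, i ≠ l → c i j = a → c l k = a → c i k ≠ b)
    (ha : ∀ i, ∃ j, c i j = a) (hb : ∀ i, ∃ j, c i j = b) :
    2 * Fintype.card ι ≤ Fintype.card κ := by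
  choose p hp using ha
  choose q hq using hb
  have hp_inj : Function.Injective p := fun i l h =>
    hcol (p i) (show c i (p i) = c l (p i) by rw [hp i, h, hp l])
  have hq_inj : Function.Injective q := fun i l h =>
    hcol (q i) (show c i (q i) = c l (q i) by rw [hq i, h, hq l])
  have hpq : ∀ i l, p l ≠ q i := by
    intro i l h
    by_cases hil : i = l
    · subst hil
      exact hab (by rw [← hp i, h, hq i])
    · exact hpath i l (p i) (p l) hil (hp i) (hp l) (h ▸ hq i)
  have hinj : Function.Injective (Sum.elim p q) := by
    rintro (i | i) (l | l) h
    · exact congrArg _ (hp_inj h)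
    · exact absurd h (hpq l i)
    · exact absurd h.symm (hpq i l)
    · exact congrArg _ (hq_inj h)
  simpa [two_mul] using Fintype.card_le_of_injective _ hinj

/-- There is no proper edge coloring of `K_{3,4}` with colors {1,2,3,4} such that
no 4-cycle has two edges colored 1 and at least one edge colored 2.
Here `c i j` is the color of the edge `uᵢvⱼ`. -/
theorem no_restricted_coloring_K34 :
    ¬ ∃ c : Fin 3 → Fin 4 → ℕ,
      (∀ i j, c i j ∈ ({1, 2, 3, 4} : Finset ℕ)) ∧
      (∀ i, Function.Injective (c i)) ∧
      (∀ j, Function.Injective fun i => c i j) ∧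
      (∀ i l, i ≠ l → ∀ j k, j ≠ k →
        ¬ (2 ≤ [c i j, c i k, c l j, c l k].count 1 ∧
            2 ∈ [c i j, c i k, c l j, c l k])) := by
  rintro ⟨c, hmem, hrow, hcol, hcyc⟩
  have hsurj : ∀ i, ∀ v ∈ ({1, 2, 3, 4} : Finset ℕ), ∃ j, c i j = v := by
    intro i v hv
    obtain ⟨j, -, rfl⟩ := Finset.surj_on_of_inj_on_of_card_le (s := Finset.univ)
      (fun j _ => c i j) (fun j _ => hmem i j) (fun _ _ _ _ h => hrow i h) (by simp) v hv
    exact ⟨j, rfl⟩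
  have hpath : ∀ i l j k, i ≠ l → c i j = 1 → c l k = 1 → c i k ≠ 2 := by
    intro i l j k hil hj hk hik
    have hjk : j ≠ k := by rintro rfl; omega
    refine hcyc i l hil j k hjk ⟨?_, by simp [hik]⟩
    rw [hj, hk, hik]
    by_cases h : c l j = 1 <;> simp [h]
  have := two_mul_card_le_of_forall_exists_eq c (by decide) hcol hpath
    (fun i => hsurj i 1 (by decide)) (fun i => hsurj i 2 (by decide))
  simp at this
end
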